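/- Let m and n be natural numbers with m ≥ 5 and 2 ≤ n ≤ m, and let G be the subgroup of the symmetric group Equiv.Perm (Fin m) generated by the set of elements of order n. Then there is no group homomorphism α : G → G such that α(g) is conjugate in G to g^n for every g ∈ G. -/

import Mathlib

/-!
An endomorphism `α` of conjugacy type `n` kills every `g` with `g ^ n = 1`, since `α g` is
conjugate to `1`. The group generated by the elements of order `n` is generated by such `g`,
so `α` is trivial, and then `g ^ n` is conjugate to `α g = 1` for every `g`: the group has
exponent dividing `n`. But it is a nontrivial normal subgroup of `Sₘ`, hence contains `Aₘ`,
which has an element of prime order `p ∤ n`: `p = 2` for odd `n`, and for even `n` a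
Bertrand prime in `(m/2, m]`.
-/

open Equiv Equiv.Perm Subgroup Nat

section ConjugacyType

variable {G : Type*} [Group G] {n : ℕ}

theorem closure_pow_eq_one_le_ker_of_isConj_pow {α : G →* G} (hα : ∀ g, IsConj (α g) (g ^ n)) :
    closure {g : G | g ^ n = 1} ≤ α.ker :=
  (closure_le _).2 fun g (hg : g ^ n = 1) => α.mem_ker.2 <| isConj_one_left.1 (hg ▸ hα g)

theorem closure_pow_eq_one_eq_top {S : Set G} (hS : ∀ s ∈ S, s ^ n = 1) :
    closure {g : closure S | g ^ n = 1} = ⊤ :=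
  top_le_iff.1 <| closure_closure_coe_preimage.symm.le.trans <| closure_mono fun g hg =>
    Subtype.ext <| by simpa using hS g hg

theorem exponent_closure_dvd_of_isConj_pow {S : Set G} (hS : ∀ s ∈ S, s ^ n = 1)
    {α : closure S →* closure S} (hα : ∀ g, IsConj (α g) (g ^ n)) :
    Monoid.exponent (closure S) ∣ n := by
  refine Monoid.exponent_dvd_iff_forall_pow_eq_one.2 fun g => isConj_one_right.1 ?_
  have hg : α g = 1 := closure_pow_eq_one_le_ker_of_isConj_pow hα <|
    (closure_pow_eq_one_eq_top hS).symm ▸ mem_top g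
  exact hg ▸ hα g

theorem normal_closure_setOf_orderOf_eq (n : ℕ) : (closure {g : G | orderOf g = n}).Normal :=
  normalizer_eq_top_iff.1 <| eq_top_iff.2 <| le_normalizer_closure_iff.2 fun h _ g hg =>
    subset_closure <| by simpa using (MulEquiv.orderOf_eq (MulAut.conj h) g).trans hg

end ConjugacyType

theorem Nat.exists_prime_two_mul_dvd_factorial_not_dvd {m n : ℕ} (hm : 4 ≤ m) (hn : 0 < n)
    (hnm : n ≤ m) : ∃ p, p.Prime ∧ 2 * p ∣ m ! ∧ ¬ p ∣ n := by
  rcases n.even_or_odd with hne | hno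
  -- A Bertrand prime `p ∈ (m/2, m]` is odd, and `p ∣ n ≤ m < 2p` would force `n = p`.
  · obtain ⟨p, hp, hlt, hle⟩ := Nat.exists_prime_lt_and_le_two_mul (m / 2) (by omega)
    have hp2 : 2 ≠ p := by omega
    have hmp : m < 2 * p := by omega
    refine ⟨p, hp, ((coprime_primes prime_two hp).2 hp2).mul_dvd_of_dvd_of_dvd
      (dvd_factorial two_pos (by omega)) (dvd_factorial hp.pos (by omega)), ?_⟩
    rintro ⟨_ | _ | k, rfl⟩
    · omega
    · exact hp2 ((hp.even_iff).1 (by simpa using hne)).symm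
    · nlinarith
  · exact ⟨2, prime_two, dvd_factorial (by norm_num) (by omega),
      fun h => Nat.not_even_iff_odd.2 hno (even_iff_two_dvd.2 h)⟩

section Alternating

variable {α : Type*} [DecidableEq α] [Fintype α] {n : ℕ}

theorem Equiv.Perm.exists_orderOf_eq (hn : 2 ≤ n) (hnα : n ≤ Nat.card α) :
    ∃ g : Perm α, orderOf g = n := by
  obtain ⟨g, hg⟩ := (exists_with_cycleType_iff α (m := {n})).2 <| by
    simpa [← Nat.card_eq_fintype_card] using ⟨hnα, hn⟩
  exact ⟨g, by rw [← lcm_cycleType, hg, Multiset.lcm_singleton, normalize_eq]⟩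

theorem alternatingGroup_le_closure_orderOf_eq (h5 : 5 ≤ Nat.card α) (hn : 2 ≤ n)
    (hnα : n ≤ Nat.card α) : alternatingGroup α ≤ closure {g : Perm α | orderOf g = n} := by
  have := normal_closure_setOf_orderOf_eq (G := Perm α) n
  obtain ⟨g, hg⟩ := exists_orderOf_eq hn hnα
  refine alternatingGroup_le_of_normal h5 ⟨⟨g, subset_closure hg⟩, 1, fun h => ?_⟩
  rw [show g = 1 from congrArg Subtype.val h, orderOf_one] at hg
  omega

theorem not_exponent_alternatingGroup_dvd (h4 : 4 ≤ Nat.card α) (hn : 0 < n)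
    (hnα : n ≤ Nat.card α) : ¬ Monoid.exponent (alternatingGroup α) ∣ n := by
  obtain ⟨p, hp, hpα, hpn⟩ := Nat.exists_prime_two_mul_dvd_factorial_not_dvd h4 hn hnα
  have : Fact p.Prime := ⟨hp⟩
  have : Nontrivial α := Finite.one_lt_card_iff_nontrivial.1 (by omega)
  have hpA : p ∣ Nat.card (alternatingGroup α) := Nat.dvd_of_mul_dvd_mul_left two_pos <| by
    rwa [two_mul_nat_card_alternatingGroup, Nat.card_perm]
  obtain ⟨g, hg⟩ := exists_prime_orderOf_dvd_card' p hpA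
  exact fun h => hpn (hg ▸ (Monoid.order_dvd_exponent g).trans h)

end Alternating

/-- For `m ≥ 5` and `2 ≤ n ≤ m`, the subgroup of the symmetric group on `m`
letters generated by the elements of order `n` admits no endomorphism of conjugacy
type `n`. -/
theorem no_endomorphism_of_conjugacy_type_n
    (m n : ℕ) (hm : 5 ≤ m) (hn : 2 ≤ n) (hnm : n ≤ m) :
    ¬ ∃ α : (Subgroup.closure {g : Equiv.Perm (Fin m) | orderOf g = n}) →*
        (Subgroup.closure {g : Equiv.Perm (Fin m) | orderOf g = n}),
      ∀ g, IsConj (α g) (g ^ n) := by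
  rintro ⟨α, hα⟩
  rw [← Nat.card_fin m] at hm hnm
  have hle := alternatingGroup_le_closure_orderOf_eq hm hn hnm
  refine not_exponent_alternatingGroup_dvd (by omega) (by omega) hnm ?_
  exact (Monoid.exponent_dvd_of_monoidHom _ (inclusion_injective hle)).trans <|
    exponent_closure_dvd_of_isConj_pow (fun g (hg : orderOf g = n) => hg ▸ pow_orderOf_eq_one g) hα
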